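/- arXiv:1309.6385 — 2 statements merged into one kernel-verified Lean document; each statement's English description precedes it below -/
import Mathlib

section
/- Let (A,H,◁,▷) be a matched pair of cosemisimple Hopf algebras with normal integrals φ_A ∈ A^∨ and φ_H ∈ H^∨. Then the bicrossproduct A⋈H is a cosemisimple Hopf algebra, the functional φ(ax) = φ_A(a)φ_H(x) is a normal integral on A⋈H, and the identities φ_A(a)φ_H(xy) = ∑φ_A(x₁▷a₁)φ_H((x₂◁a₂)y) and φ_A(ba)φ_H(x) = ∑φ_A(b(x₁▷a₁))φ_H(x₂◁a₂) hold for all x,y ∈ H and a,b ∈ A. -/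
open scoped TensorProduct
open Coalgebra

noncomputable section

/-- A Sweedler representation of the comultiplication of `x`:
`Δ x = ∑ᵢ x1 i ⊗ x2 i`. -/
def Rep2 {H : Type} [AddCommGroup H] [Module ℂ H] [Coalgebra ℂ H]
    {ι : Type} (x : H) (s : Finset ι) (x1 x2 : ι → H) : Prop :=
  Coalgebra.comul (R := ℂ) x = ∑ i ∈ s, x1 i ⊗ₜ[ℂ] x2 i

/-- A representation of an element of a tensor product as a finite sum of pure tensors. -/
def TRep {M N : Type} [AddCommGroup M] [Module ℂ M] [AddCommGroup N] [Module ℂ N]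
    {ι : Type} (w : M ⊗[ℂ] N) (s : Finset ι) (p : ι → M) (q : ι → N) : Prop :=
  w = ∑ i ∈ s, p i ⊗ₜ[ℂ] q i

/-- The iterated comultiplication `x ↦ ∑ (x₁ ⊗ x₂) ⊗ x₃`. -/
def comul3 (H : Type) [AddCommGroup H] [Module ℂ H] [Coalgebra ℂ H] :
    H →ₗ[ℂ] (H ⊗[ℂ] H) ⊗[ℂ] H :=
  (LinearMap.rTensor H (Coalgebra.comul (R := ℂ))) ∘ₗ Coalgebra.comul (R := ℂ)

/-- The iterated comultiplication with four output legs. -/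
def comul4 (H : Type) [AddCommGroup H] [Module ℂ H] [Coalgebra ℂ H] :
    H →ₗ[ℂ] ((H ⊗[ℂ] H) ⊗[ℂ] H) ⊗[ℂ] H :=
  (LinearMap.rTensor H (comul3 H)) ∘ₗ Coalgebra.comul (R := ℂ)

/-- The iterated comultiplication with five output legs. -/
def comul5 (H : Type) [AddCommGroup H] [Module ℂ H] [Coalgebra ℂ H] :
    H →ₗ[ℂ] (((H ⊗[ℂ] H) ⊗[ℂ] H) ⊗[ℂ] H) ⊗[ℂ] H :=
  (LinearMap.rTensor H (comul4 H)) ∘ₗ Coalgebra.comul (R := ℂ)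

/-- The iterated comultiplication with six output legs. -/
def comul6 (H : Type) [AddCommGroup H] [Module ℂ H] [Coalgebra ℂ H] :
    H →ₗ[ℂ] ((((H ⊗[ℂ] H) ⊗[ℂ] H) ⊗[ℂ] H) ⊗[ℂ] H) ⊗[ℂ] H :=
  (LinearMap.rTensor H (comul5 H)) ∘ₗ Coalgebra.comul (R := ℂ)

/-- A `*`-structure on a Hopf algebra over `ℂ`: a conjugate-linear involution which is
antimultiplicative and comultiplicative.  Together with the Hopf algebra this is the data of
a `*`-Hopf algebra. -/
structure StarHopf (H : Type) [Ring H] [HopfAlgebra ℂ H] : Type where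
  st : H → H
  st_add : ∀ x y : H, st (x + y) = st x + st y
  st_smul : ∀ (c : ℂ) (x : H), st (c • x) = (starRingEnd ℂ) c • st x
  st_invol : ∀ x : H, st (st x) = x
  st_antimul : ∀ x y : H, st (x * y) = st y * st x
  st_comul : ∀ (x : H) {ι : Type} (s : Finset ι) (x1 x2 : ι → H),
      Rep2 x s x1 x2 →
      Coalgebra.comul (R := ℂ) (st x) = ∑ i ∈ s, st (x1 i) ⊗ₜ[ℂ] st (x2 i)

/-- A right comodule over a Hopf algebra. -/
structure RightComodule (H : Type) [Ring H] [HopfAlgebra ℂ H]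
    (V : Type) [AddCommGroup V] [Module ℂ V] : Type where
  ρ : V →ₗ[ℂ] V ⊗[ℂ] H
  counit_cond : ∀ v : V, (TensorProduct.rid ℂ V)
      ((LinearMap.lTensor V (Coalgebra.counit (R := ℂ))) (ρ v)) = v
  coassoc_cond : ∀ v : V, (LinearMap.rTensor H ρ) (ρ v)
      = (TensorProduct.assoc ℂ V H H).symm
          ((LinearMap.lTensor V (Coalgebra.comul (R := ℂ))) (ρ v))

/-- An inner product: sesquilinear (linear in the first variable), conjugate-symmetric and
positive definite. -/
structure IsInner {V : Type} [AddCommGroup V] [Module ℂ V] (ip : V → V → ℂ) : Prop where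
  add_left : ∀ u u' v : V, ip (u + u') v = ip u v + ip u' v
  smul_left : ∀ (c : ℂ) (u v : V), ip (c • u) v = c * ip u v
  conj_symm : ∀ u v : V, ip v u = (starRingEnd ℂ) (ip u v)
  pos_def : ∀ v : V, v ≠ 0 → 0 < (ip v v).re

/-- The invariance condition `∑ ⟨u₀,v⟩ S(u₁) = ∑ ⟨u,v₀⟩ v₁*` for a sesquilinear form on a
right comodule. -/
def RInvariant {H : Type} [Ring H] [HopfAlgebra ℂ H] (σ : StarHopf H)
    {V : Type} [AddCommGroup V] [Module ℂ V] (c : RightComodule H V)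
    (ip : V → V → ℂ) : Prop :=
  ∀ (u v : V) {ι κ : Type} (s : Finset ι) (t : Finset κ)
    (u0 : ι → V) (u1 : ι → H) (v0 : κ → V) (v1 : κ → H),
    TRep (c.ρ u) s u0 u1 → TRep (c.ρ v) t v0 v1 →
    ∑ i ∈ s, ip (u0 i) v • (HopfAlgebra.antipode (R := ℂ) (u1 i))
      = ∑ j ∈ t, ip u (v0 j) • σ.st (v1 j)

/-- A compact quantum group: a `*`-Hopf algebra such that every right comodule admits an
invariant inner product. -/
def IsCQG (H : Type) [Ring H] [HopfAlgebra ℂ H] (σ : StarHopf H) : Prop :=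
  ∀ (V : Type) [AddCommGroup V] [Module ℂ V] (c : RightComodule H V),
    ∃ ip : V → V → ℂ, IsInner ip ∧ RInvariant σ c ip

/-- `φ` is a normal integral on the Hopf algebra `H` (a two-sided integral with `φ(1) = 1`);
a Hopf algebra is cosemisimple iff it admits a normal integral. -/
def IsNormalIntegral (H : Type) [Ring H] [HopfAlgebra ℂ H] (φ : H →ₗ[ℂ] ℂ) : Prop :=
  φ 1 = 1 ∧
  (∀ (x : H) {ι : Type} (s : Finset ι) (x1 x2 : ι → H), Rep2 x s x1 x2 →
      ∑ i ∈ s, φ (x1 i) • x2 i = φ x • (1 : H)) ∧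
  (∀ (x : H) {ι : Type} (s : Finset ι) (x1 x2 : ι → H), Rep2 x s x1 x2 →
      ∑ i ∈ s, φ (x2 i) • x1 i = φ x • (1 : H))

/-- A matched pair of Hopf algebras `(A, H, ◁, ▷)`:
`tri x a = x ▷ a` and `trl x a = x ◁ a`. -/
structure IsMatchedPair (A H : Type) [Ring A] [HopfAlgebra ℂ A] [Ring H] [HopfAlgebra ℂ H]
    (tri : H →ₗ[ℂ] A →ₗ[ℂ] A) (trl : H →ₗ[ℂ] A →ₗ[ℂ] H) : Prop where
  -- `(A, ▷)` is a left `H`-module coalgebra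
  tri_one_act : ∀ a : A, tri 1 a = a
  tri_mul_act : ∀ (x y : H) (a : A), tri (x * y) a = tri x (tri y a)
  tri_counit : ∀ (x : H) (a : A),
      Coalgebra.counit (R := ℂ) (tri x a)
        = Coalgebra.counit (R := ℂ) x * Coalgebra.counit (R := ℂ) a
  tri_comul : ∀ (x : H) (a : A) {ι κ : Type} (s : Finset ι) (t : Finset κ)
      (x1 x2 : ι → H) (a1 a2 : κ → A), Rep2 x s x1 x2 → Rep2 a t a1 a2 →
      Coalgebra.comul (R := ℂ) (tri x a)
        = ∑ i ∈ s, ∑ j ∈ t, tri (x1 i) (a1 j) ⊗ₜ[ℂ] tri (x2 i) (a2 j)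
  -- `(H, ◁)` is a right `A`-module coalgebra
  trl_one_act : ∀ x : H, trl x 1 = x
  trl_mul_act : ∀ (x : H) (a b : A), trl x (a * b) = trl (trl x a) b
  trl_counit : ∀ (x : H) (a : A),
      Coalgebra.counit (R := ℂ) (trl x a)
        = Coalgebra.counit (R := ℂ) x * Coalgebra.counit (R := ℂ) a
  trl_comul : ∀ (x : H) (a : A) {ι κ : Type} (s : Finset ι) (t : Finset κ)
      (x1 x2 : ι → H) (a1 a2 : κ → A), Rep2 x s x1 x2 → Rep2 a t a1 a2 →
      Coalgebra.comul (R := ℂ) (trl x a)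
        = ∑ i ∈ s, ∑ j ∈ t, trl (x1 i) (a1 j) ⊗ₜ[ℂ] trl (x2 i) (a2 j)
  -- the compatibility relations
  compat_mul : ∀ (x : H) (a b : A) {ι κ : Type} (s : Finset ι) (t : Finset κ)
      (x1 x2 : ι → H) (a1 a2 : κ → A), Rep2 x s x1 x2 → Rep2 a t a1 a2 →
      tri x (a * b) = ∑ i ∈ s, ∑ j ∈ t, tri (x1 i) (a1 j) * tri (trl (x2 i) (a2 j)) b
  compat_one : ∀ x : H, tri x 1 = Coalgebra.counit (R := ℂ) x • (1 : A)
  compat_mul' : ∀ (x y : H) (a : A) {ι κ : Type} (s : Finset ι) (t : Finset κ)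
      (y1 y2 : ι → H) (a1 a2 : κ → A), Rep2 y s y1 y2 → Rep2 a t a1 a2 →
      trl (x * y) a = ∑ i ∈ s, ∑ j ∈ t, trl x (tri (y1 i) (a1 j)) * trl (y2 i) (a2 j)
  compat_one' : ∀ a : A, trl 1 a = Coalgebra.counit (R := ℂ) a • (1 : H)
  compat_sym : ∀ (x : H) (a : A) {ι κ : Type} (s : Finset ι) (t : Finset κ)
      (x1 x2 : ι → H) (a1 a2 : κ → A), Rep2 x s x1 x2 → Rep2 a t a1 a2 →
      ∑ i ∈ s, ∑ j ∈ t, trl (x1 i) (a1 j) ⊗ₜ[ℂ] tri (x2 i) (a2 j)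
        = ∑ i ∈ s, ∑ j ∈ t, trl (x2 i) (a2 j) ⊗ₜ[ℂ] tri (x1 i) (a1 j)

/-- `M`, identified with `A ⊗ H` via `e`, carries the bicrossproduct Hopf algebra structure
`A ⋈ H` of the matched pair `(A, H, ◁, ▷)`. -/
structure IsBicross (A H : Type) [Ring A] [HopfAlgebra ℂ A] [Ring H] [HopfAlgebra ℂ H]
    (tri : H →ₗ[ℂ] A →ₗ[ℂ] A) (trl : H →ₗ[ℂ] A →ₗ[ℂ] H)
    (M : Type) [Ring M] [HopfAlgebra ℂ M] (e : A ⊗[ℂ] H ≃ₗ[ℂ] M) : Prop where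
  mul_def : ∀ (a b : A) (x y : H) {ι κ : Type} (s : Finset ι) (t : Finset κ)
      (x1 x2 : ι → H) (b1 b2 : κ → A), Rep2 x s x1 x2 → Rep2 b t b1 b2 →
      e (a ⊗ₜ[ℂ] x) * e (b ⊗ₜ[ℂ] y)
        = ∑ i ∈ s, ∑ j ∈ t, e ((a * tri (x1 i) (b1 j)) ⊗ₜ[ℂ] (trl (x2 i) (b2 j) * y))
  one_def : (1 : M) = e ((1 : A) ⊗ₜ[ℂ] (1 : H))
  comul_def : ∀ (a : A) (x : H) {ι κ : Type} (s : Finset ι) (t : Finset κ)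
      (a1 a2 : ι → A) (x1 x2 : κ → H), Rep2 a s a1 a2 → Rep2 x t x1 x2 →
      Coalgebra.comul (R := ℂ) (e (a ⊗ₜ[ℂ] x))
        = ∑ i ∈ s, ∑ j ∈ t, e (a1 i ⊗ₜ[ℂ] x1 j) ⊗ₜ[ℂ] e (a2 i ⊗ₜ[ℂ] x2 j)
  counit_def : ∀ (a : A) (x : H),
      Coalgebra.counit (R := ℂ) (e (a ⊗ₜ[ℂ] x))
        = Coalgebra.counit (R := ℂ) a * Coalgebra.counit (R := ℂ) x

/-! Since the coalgebra structure of `A ⋈ H` is that of `A ⊗ H`, the product functional is a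
two-sided integral as soon as `φ_A` and `φ_H` are. The two identities reduce to the invariance
of the integrals under the actions, `φ_A(x ▷ a) = ε(x) φ_A(a)` and `φ_H(x ◁ a) = ε(a) φ_H(x)`.
For `◁`, expanding `x₂ = ∑ (x₂ ◁ a₂) ◁ S(a₃)` and applying the left integral property to
`Δ(x ◁ a₁)` gives `∑ φ_H(x₁ ◁ a) x₂ = φ_H(x ◁ a) 1`; applying `φ_H` to this and to the image of
`∑ φ_H(x₂) x₁ = φ_H(x) 1` under `(·) ◁ a` then yields the invariance. The case of `▷` is the
mirror image: `∑ φ_A(x ▷ a₂) a₁ = ∑ φ_A(x₃ ▷ a₂) (S(x₁) x₂ ▷ a₁)` and the right integral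
property give `∑ φ_A(x ▷ a₂) a₁ = φ_A(x ▷ a) 1`. -/

open HopfAlgebra

section Sweedler

variable {K W : Type} [AddCommGroup K] [Module ℂ K] [Coalgebra ℂ K] [AddCommGroup W] [Module ℂ W]

theorem rep2_repr (x : K) : Rep2 x (ℛ ℂ x).index (ℛ ℂ x).left (ℛ ℂ x).right :=
  (ℛ ℂ x).eq.symm

theorem Rep2.sum_eq_lift_comul {x : K} {ι : Type} {s : Finset ι} {x1 x2 : ι → K}
    (hx : Rep2 x s x1 x2) (B : K →ₗ[ℂ] K →ₗ[ℂ] W) :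
    ∑ i ∈ s, B (x1 i) (x2 i) = TensorProduct.lift B (comul (R := ℂ) x) := by
  unfold Rep2 at hx
  simp only [hx, map_sum, TensorProduct.lift.tmul]

theorem sum_counit_smul_right {x : K} {ι : Type*} (r : Repr ℂ x ι) :
    ∑ i ∈ r.index, counit (R := ℂ) (r.right i) • r.left i = x := by
  simpa only [map_sum, TensorProduct.rid_tmul, one_smul] using
    congr(TensorProduct.rid ℂ K $(sum_tmul_counit_eq r))

section

variable {x : K} {ι : Type} {s : Finset ι} {x1 x2 : ι → K}

theorem Rep2.sum_counit_smul (hx : Rep2 x s x1 x2) :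
    ∑ i ∈ s, counit (R := ℂ) (x1 i) • x2 i = x :=
  Coalgebra.sum_counit_smul ⟨s, x1, x2, hx.symm⟩

theorem Rep2.sum_counit_smul_right (hx : Rep2 x s x1 x2) :
    ∑ i ∈ s, counit (R := ℂ) (x2 i) • x1 i = x :=
  _root_.sum_counit_smul_right ⟨s, x1, x2, hx.symm⟩

end

end Sweedler

section Antipode

variable {C W : Type} [Ring C] [HopfAlgebra ℂ C] [AddCommGroup W] [Module ℂ W]

theorem sum_sum_mul_antipode {a : C} {ι : Type*} {κ : ι → Type*} (r : Repr ℂ a ι)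
    (r1 : ∀ i, Repr ℂ (r.left i) (κ i)) (Ψ : C →ₗ[ℂ] C →ₗ[ℂ] W) :
    ∑ i ∈ r.index, ∑ k ∈ (r1 i).index,
        Ψ ((r1 i).left k) ((r1 i).right k * antipode ℂ (r.right i)) = Ψ a 1 := by
  have h := congr(TensorProduct.lift (Ψ.compl₂ (LinearMap.mul' ℂ C ∘ₗ (antipode ℂ).lTensor C))
    $(sum_tmul_tmul_eq r r1 fun i => ℛ ℂ (r.right i)))
  simp only [map_sum, TensorProduct.lift.tmul, LinearMap.compl₂_apply, LinearMap.comp_apply,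
    LinearMap.lTensor_tmul, LinearMap.mul'_apply] at h
  calc _ = ∑ i ∈ r.index, Ψ (counit (R := ℂ) (r.right i) • r.left i) 1 := by
        simp only [h, ← map_sum, sum_mul_antipode_eq_smul, map_smul, LinearMap.smul_apply]
    _ = Ψ a 1 := by rw [← LinearMap.sum_apply, ← map_sum, sum_counit_smul_right]

theorem sum_sum_antipode_mul {x : C} {ι : Type*} {Λ : ι → Type*} (r : Repr ℂ x ι)
    (r2 : ∀ i, Repr ℂ (r.right i) (Λ i)) (Ψ : C →ₗ[ℂ] C →ₗ[ℂ] W) :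
    ∑ i ∈ r.index, ∑ k ∈ (r2 i).index,
        Ψ (antipode ℂ (r.left i) * (r2 i).left k) ((r2 i).right k) = Ψ 1 x := by
  have h := congr(TensorProduct.lift (Ψ ∘ₗ LinearMap.mul' ℂ C ∘ₗ (antipode ℂ).rTensor C)
    ((TensorProduct.assoc ℂ C C C).symm $(sum_tmul_tmul_eq r (fun i => ℛ ℂ (r.left i)) r2)))
  simp only [map_sum, TensorProduct.assoc_symm_tmul, TensorProduct.lift.tmul,
    LinearMap.comp_apply, LinearMap.rTensor_tmul, LinearMap.mul'_apply] at h
  calc _ = ∑ i ∈ r.index, Ψ 1 (counit (R := ℂ) (r.left i) • r.right i) := by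
        simp only [← h, ← map_sum, ← LinearMap.sum_apply, sum_antipode_mul_eq_smul, map_smul,
          LinearMap.smul_apply]
    _ = Ψ 1 x := by rw [← map_sum, sum_counit_smul]

end Antipode

section Integral

variable {K : Type} [Ring K] [HopfAlgebra ℂ K]

def IsLeftIntegral (φ : K →ₗ[ℂ] ℂ) : Prop :=
  ∀ x : K, TensorProduct.lift ((LinearMap.lsmul ℂ K).compl₁₂ φ LinearMap.id) (comul (R := ℂ) x)
    = φ x • 1

def IsRightIntegral (φ : K →ₗ[ℂ] ℂ) : Prop :=
  ∀ x : K,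
    TensorProduct.lift ((LinearMap.lsmul ℂ K).compl₁₂ φ LinearMap.id).flip (comul (R := ℂ) x)
      = φ x • 1

variable {φ : K →ₗ[ℂ] ℂ}

theorem isLeftIntegral_iff :
    IsLeftIntegral φ ↔ ∀ (x : K) {ι : Type} (s : Finset ι) (x1 x2 : ι → K), Rep2 x s x1 x2 →
      ∑ i ∈ s, φ (x1 i) • x2 i = φ x • (1 : K) := by
  refine ⟨fun h x ι s x1 x2 hx => ?_, fun h x => ?_⟩
  · simpa using (hx.sum_eq_lift_comul _).trans (h x)
  · simpa using ((rep2_repr x).sum_eq_lift_comul _).symm.trans (h x _ _ _ (rep2_repr x))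

theorem isRightIntegral_iff :
    IsRightIntegral φ ↔ ∀ (x : K) {ι : Type} (s : Finset ι) (x1 x2 : ι → K), Rep2 x s x1 x2 →
      ∑ i ∈ s, φ (x2 i) • x1 i = φ x • (1 : K) := by
  refine ⟨fun h x ι s x1 x2 hx => ?_, fun h x => ?_⟩
  · simpa using (hx.sum_eq_lift_comul _).trans (h x)
  · simpa using ((rep2_repr x).sum_eq_lift_comul _).symm.trans (h x _ _ _ (rep2_repr x))

theorem isNormalIntegral_iff :
    IsNormalIntegral K φ ↔ φ 1 = 1 ∧ IsLeftIntegral φ ∧ IsRightIntegral φ := by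
  rw [isLeftIntegral_iff, isRightIntegral_iff]
  rfl

end Integral

namespace IsMatchedPair

variable {A H : Type} [Ring A] [HopfAlgebra ℂ A] [Ring H] [HopfAlgebra ℂ H]
  {tri : H →ₗ[ℂ] A →ₗ[ℂ] A} {trl : H →ₗ[ℂ] A →ₗ[ℂ] H}

theorem rep2_tri (hmp : IsMatchedPair A H tri trl) {x : H} {a : A} {ι κ : Type}
    {s : Finset ι} {t : Finset κ} {x1 x2 : ι → H} {a1 a2 : κ → A}
    (hx : Rep2 x s x1 x2) (ha : Rep2 a t a1 a2) :
    Rep2 (tri x a) (s ×ˢ t) (fun p => tri (x1 p.1) (a1 p.2)) (fun p => tri (x2 p.1) (a2 p.2)) := by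
  rw [Rep2, Finset.sum_product]
  exact hmp.tri_comul x a s t x1 x2 a1 a2 hx ha

theorem rep2_trl (hmp : IsMatchedPair A H tri trl) {x : H} {a : A} {ι κ : Type}
    {s : Finset ι} {t : Finset κ} {x1 x2 : ι → H} {a1 a2 : κ → A}
    (hx : Rep2 x s x1 x2) (ha : Rep2 a t a1 a2) :
    Rep2 (trl x a) (s ×ˢ t) (fun p => trl (x1 p.1) (a1 p.2)) (fun p => trl (x2 p.1) (a2 p.2)) := by
  rw [Rep2, Finset.sum_product]
  exact hmp.trl_comul x a s t x1 x2 a1 a2 hx ha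

theorem sum_integral_trl_smul (hmp : IsMatchedPair A H tri trl) {φH : H →ₗ[ℂ] ℂ}
    (hφH : IsLeftIntegral φH) (a : A) {x : H} {ι : Type} {s : Finset ι} {x1 x2 : ι → H}
    (hx : Rep2 x s x1 x2) :
    ∑ i ∈ s, φH (trl (x1 i) a) • x2 i = φH (trl x a) • 1 := by
  let Ψ : A →ₗ[ℂ] A →ₗ[ℂ] H :=
    ∑ i ∈ s, (LinearMap.lsmul ℂ H).compl₁₂ (φH ∘ₗ trl (x1 i)) (trl (x2 i))
  have hΨ : ∀ b c, Ψ b c = ∑ i ∈ s, φH (trl (x1 i) b) • trl (x2 i) c := by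
    simp [Ψ]
  have hΨ_mul : ∀ b c d, Ψ b (c * d) = trl (Ψ b c) d := by
    simp [hΨ, hmp.trl_mul_act, map_sum]
  have hΨ_comul : ∀ b : A, ∑ k ∈ (ℛ ℂ b).index, Ψ ((ℛ ℂ b).left k) ((ℛ ℂ b).right k)
      = φH (trl x b) • 1 := by
    intro b
    rw [← (isLeftIntegral_iff.mp hφH) _ _ _ _ (hmp.rep2_trl hx (rep2_repr b)),
      Finset.sum_product, Finset.sum_comm]
    simp [hΨ]
  let r := ℛ ℂ a
  calc ∑ i ∈ s, φH (trl (x1 i) a) • x2 i = Ψ a 1 := by simp [hΨ, hmp.trl_one_act]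
    _ = ∑ j ∈ r.index, trl (∑ k ∈ (ℛ ℂ (r.left j)).index,
          Ψ ((ℛ ℂ (r.left j)).left k) ((ℛ ℂ (r.left j)).right k)) (antipode ℂ (r.right j)) := by
        rw [← sum_sum_mul_antipode r (fun j => ℛ ℂ (r.left j)) Ψ]
        simp [hΨ_mul, map_sum]
    _ = ∑ j ∈ r.index, (counit (R := ℂ) (r.right j) • φH (trl x (r.left j))) • (1 : H) := by
        simp [hΨ_comul, hmp.compat_one', smul_smul, mul_comm]
    _ = φH (trl x a) • 1 := by
        rw [← Finset.sum_smul]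
        simp only [← map_smul, ← map_sum, sum_counit_smul_right]

theorem sum_integral_tri_smul (hmp : IsMatchedPair A H tri trl) {φA : A →ₗ[ℂ] ℂ}
    (hφA : IsRightIntegral φA) (x : H) {a : A} {κ : Type} {t : Finset κ} {a1 a2 : κ → A}
    (ha : Rep2 a t a1 a2) :
    ∑ j ∈ t, φA (tri x (a2 j)) • a1 j = φA (tri x a) • 1 := by
  let Ψ : H →ₗ[ℂ] H →ₗ[ℂ] A :=
    ∑ j ∈ t, ((LinearMap.lsmul ℂ A).compl₁₂ (φA ∘ₗ tri.flip (a2 j)) (tri.flip (a1 j))).flip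
  have hΨ : ∀ y z, Ψ y z = ∑ j ∈ t, φA (tri z (a2 j)) • tri y (a1 j) := by
    simp [Ψ]
  have hΨ_mul : ∀ y y' z, Ψ (y * y') z = tri y (Ψ y' z) := by
    simp [hΨ, hmp.tri_mul_act, map_sum]
  have hΨ_comul : ∀ y : H, ∑ k ∈ (ℛ ℂ y).index, Ψ ((ℛ ℂ y).left k) ((ℛ ℂ y).right k)
      = φA (tri y a) • 1 := by
    intro y
    rw [← (isRightIntegral_iff.mp hφA) _ _ _ _ (hmp.rep2_tri (rep2_repr y) ha),
      Finset.sum_product]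
    simp [hΨ]
  let r := ℛ ℂ x
  calc ∑ j ∈ t, φA (tri x (a2 j)) • a1 j = Ψ 1 x := by simp [hΨ, hmp.tri_one_act]
    _ = ∑ i ∈ r.index, tri (antipode ℂ (r.left i)) (∑ k ∈ (ℛ ℂ (r.right i)).index,
          Ψ ((ℛ ℂ (r.right i)).left k) ((ℛ ℂ (r.right i)).right k)) := by
        rw [← sum_sum_antipode_mul r (fun i => ℛ ℂ (r.right i)) Ψ]
        simp [hΨ_mul, map_sum]
    _ = ∑ i ∈ r.index, (counit (R := ℂ) (r.left i) • φA (tri (r.right i) a)) • (1 : A) := by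
        simp [hΨ_comul, hmp.compat_one, smul_smul, mul_comm]
    _ = φA (tri x a) • 1 := by
        have hlin : ∀ y, φA (tri y a) = (φA ∘ₗ tri.flip a) y := fun _ => rfl
        rw [← Finset.sum_smul]
        simp only [hlin, ← map_smul, ← map_sum, sum_counit_smul]

theorem integral_trl_eq_counit_mul (hmp : IsMatchedPair A H tri trl) {φH : H →ₗ[ℂ] ℂ}
    (hφH : IsNormalIntegral H φH) (x : H) (a : A) :
    φH (trl x a) = counit (R := ℂ) a * φH x := by
  obtain ⟨hone, hleft, hright⟩ := isNormalIntegral_iff.mp hφH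
  let r := ℛ ℂ x
  have h₁ : ∑ i ∈ r.index, φH (trl (r.left i) a) * φH (r.right i) = φH (trl x a) := by
    simpa [hone, map_sum] using congr(φH $(hmp.sum_integral_trl_smul hleft a (rep2_repr x)))
  have h₂ : ∑ i ∈ r.index, φH (r.right i) * φH (trl (r.left i) a) = φH x * counit a := by
    simpa [hone, map_sum, hmp.compat_one'] using
      congr(φH (trl $(isRightIntegral_iff.mp hright x _ _ _ (rep2_repr x)) a))
  rw [← h₁, mul_comm, ← h₂]
  simp_rw [mul_comm]

theorem integral_tri_eq_counit_mul (hmp : IsMatchedPair A H tri trl) {φA : A →ₗ[ℂ] ℂ}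
    (hφA : IsNormalIntegral A φA) (x : H) (a : A) :
    φA (tri x a) = counit (R := ℂ) x * φA a := by
  obtain ⟨hone, hleft, hright⟩ := isNormalIntegral_iff.mp hφA
  let r := ℛ ℂ a
  have h₁ : ∑ i ∈ r.index, φA (tri x (r.right i)) * φA (r.left i) = φA (tri x a) := by
    simpa [hone, map_sum] using congr(φA $(hmp.sum_integral_tri_smul hright x (rep2_repr a)))
  have h₂ : ∑ i ∈ r.index, φA (r.left i) * φA (tri x (r.right i)) = φA a * counit x := by
    simpa [hone, map_sum, hmp.compat_one] using
      congr(φA (tri x $(isLeftIntegral_iff.mp hleft a _ _ _ (rep2_repr a))))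
  rw [← h₁, mul_comm, ← h₂]
  simp_rw [mul_comm]

theorem sum_integral_tri_smul_trl (hmp : IsMatchedPair A H tri trl) {φA : A →ₗ[ℂ] ℂ}
    (hφA : IsNormalIntegral A φA) {x : H} {a : A} {ι κ : Type} {s : Finset ι} {t : Finset κ}
    {x1 x2 : ι → H} {a1 a2 : κ → A} (hx : Rep2 x s x1 x2) (ha : Rep2 a t a1 a2) :
    ∑ i ∈ s, ∑ j ∈ t, φA (tri (x1 i) (a1 j)) • trl (x2 i) (a2 j) = φA a • x := by
  calc _ = ∑ j ∈ t, φA (a1 j) • trl (∑ i ∈ s, counit (R := ℂ) (x1 i) • x2 i) (a2 j) := by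
        rw [Finset.sum_comm]
        simp [hmp.integral_tri_eq_counit_mul hφA, Finset.smul_sum, smul_smul, mul_comm]
    _ = trl x (∑ j ∈ t, φA (a1 j) • a2 j) := by rw [hx.sum_counit_smul]; simp [map_sum]
    _ = φA a • x := by
        rw [(isLeftIntegral_iff.mp (isNormalIntegral_iff.mp hφA).2.1) a t a1 a2 ha, map_smul,
          hmp.trl_one_act]

theorem sum_integral_trl_smul_tri (hmp : IsMatchedPair A H tri trl) {φH : H →ₗ[ℂ] ℂ}
    (hφH : IsNormalIntegral H φH) {x : H} {a : A} {ι κ : Type} {s : Finset ι} {t : Finset κ}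
    {x1 x2 : ι → H} {a1 a2 : κ → A} (hx : Rep2 x s x1 x2) (ha : Rep2 a t a1 a2) :
    ∑ i ∈ s, ∑ j ∈ t, φH (trl (x2 i) (a2 j)) • tri (x1 i) (a1 j) = φH x • a := by
  calc _ = ∑ i ∈ s, φH (x2 i) • tri (x1 i) (∑ j ∈ t, counit (R := ℂ) (a2 j) • a1 j) := by
        simp [hmp.integral_trl_eq_counit_mul hφH, Finset.smul_sum, smul_smul, mul_comm]
    _ = tri.flip a (∑ i ∈ s, φH (x2 i) • x1 i) := by
        rw [ha.sum_counit_smul_right]; simp [map_sum]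
    _ = φH x • a := by
        rw [(isRightIntegral_iff.mp (isNormalIntegral_iff.mp hφH).2.2) x s x1 x2 hx, map_smul,
          LinearMap.flip_apply, hmp.tri_one_act]

end IsMatchedPair

namespace IsBicross

variable {A H : Type} [Ring A] [HopfAlgebra ℂ A] [Ring H] [HopfAlgebra ℂ H]
  {tri : H →ₗ[ℂ] A →ₗ[ℂ] A} {trl : H →ₗ[ℂ] A →ₗ[ℂ] H}
  {M : Type} [Ring M] [HopfAlgebra ℂ M] {e : A ⊗[ℂ] H ≃ₗ[ℂ] M}

theorem lift_comul_tmul (hM : IsBicross A H tri trl M e) {BA : A →ₗ[ℂ] A →ₗ[ℂ] A}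
    {BH : H →ₗ[ℂ] H →ₗ[ℂ] H} {BM : M →ₗ[ℂ] M →ₗ[ℂ] M}
    (hB : ∀ a a' x x', BM (e (a ⊗ₜ x)) (e (a' ⊗ₜ x')) = e (BA a a' ⊗ₜ BH x x'))
    (a : A) (x : H) :
    TensorProduct.lift BM (comul (R := ℂ) (e (a ⊗ₜ x))) =
      e (TensorProduct.lift BA (comul (R := ℂ) a) ⊗ₜ TensorProduct.lift BH (comul (R := ℂ) x)) := by
  rw [hM.comul_def a x _ _ _ _ _ _ (rep2_repr a) (rep2_repr x),
    ← (rep2_repr a).sum_eq_lift_comul, ← (rep2_repr x).sum_eq_lift_comul]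
  simp only [map_sum, TensorProduct.lift.tmul, hB, TensorProduct.sum_tmul, TensorProduct.tmul_sum]
  exact Finset.sum_comm

theorem lift_comul_eq_smul_one (hM : IsBicross A H tri trl M e) {φA : A →ₗ[ℂ] ℂ}
    {φH : H →ₗ[ℂ] ℂ} {φ : M →ₗ[ℂ] ℂ} (hφ : ∀ a x, φ (e (a ⊗ₜ x)) = φA a * φH x)
    {BA : A →ₗ[ℂ] A →ₗ[ℂ] A} {BH : H →ₗ[ℂ] H →ₗ[ℂ] H} {BM : M →ₗ[ℂ] M →ₗ[ℂ] M}
    (hB : ∀ a a' x x', BM (e (a ⊗ₜ x)) (e (a' ⊗ₜ x')) = e (BA a a' ⊗ₜ BH x x'))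
    (hA : ∀ a, TensorProduct.lift BA (comul (R := ℂ) a) = φA a • 1)
    (hH : ∀ x, TensorProduct.lift BH (comul (R := ℂ) x) = φH x • 1) (m : M) :
    TensorProduct.lift BM (comul (R := ℂ) m) = φ m • 1 := by
  obtain ⟨w, rfl⟩ := e.surjective m
  induction w using TensorProduct.induction_on with
  | zero => simp
  | tmul a x =>
    rw [hM.lift_comul_tmul hB, hA, hH, hφ, hM.one_def, TensorProduct.smul_tmul_smul, map_smul]
  | add u v hu hv => simp only [map_add, hu, hv, add_smul]

theorem isNormalIntegral (hM : IsBicross A H tri trl M e) {φA : A →ₗ[ℂ] ℂ}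
    (hφA : IsNormalIntegral A φA) {φH : H →ₗ[ℂ] ℂ} (hφH : IsNormalIntegral H φH) :
    IsNormalIntegral M
      ((LinearMap.mul' ℂ ℂ) ∘ₗ (TensorProduct.map φA φH) ∘ₗ (e.symm : M →ₗ[ℂ] A ⊗[ℂ] H)) := by
  have hφ : ∀ a x, ((LinearMap.mul' ℂ ℂ) ∘ₗ (TensorProduct.map φA φH) ∘ₗ
      (e.symm : M →ₗ[ℂ] A ⊗[ℂ] H)) (e (a ⊗ₜ x)) = φA a * φH x := by
    simp
  obtain ⟨hA1, hAl, hAr⟩ := isNormalIntegral_iff.mp hφA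
  obtain ⟨hH1, hHl, hHr⟩ := isNormalIntegral_iff.mp hφH
  refine isNormalIntegral_iff.mpr ⟨?_, hM.lift_comul_eq_smul_one hφ ?_ hAl hHl,
    hM.lift_comul_eq_smul_one hφ ?_ hAr hHr⟩
  · rw [hM.one_def, hφ, hA1, hH1, mul_one]
  all_goals
    intro a a' x x'
    simp only [LinearMap.flip_apply, LinearMap.compl₁₂_apply, LinearMap.lsmul_apply,
      LinearMap.id_apply, hφ]
    rw [TensorProduct.smul_tmul_smul, map_smul]

end IsBicross

/-- Let `(A, H, ◁, ▷)` be a matched pair of cosemisimple Hopf algebras with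
normal integrals `φ_A` and `φ_H`.  Then the bicrossproduct `A ⋈ H` is cosemisimple: the
functional `φ(a x) = φ_A(a) φ_H(x)` is a normal integral on `A ⋈ H`; moreover
`φ_A(a) φ_H(xy) = ∑ φ_A(x₁ ▷ a₁) φ_H((x₂ ◁ a₂) y)` and
`φ_A(b a) φ_H(x) = ∑ φ_A(b (x₁ ▷ a₁)) φ_H(x₂ ◁ a₂)` for all `x, y ∈ H`, `a, b ∈ A`. -/
theorem bicrossproduct_normal_integral
    {A H : Type} [Ring A] [HopfAlgebra ℂ A] [Ring H] [HopfAlgebra ℂ H]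
    (tri : H →ₗ[ℂ] A →ₗ[ℂ] A) (trl : H →ₗ[ℂ] A →ₗ[ℂ] H)
    (hmp : IsMatchedPair A H tri trl)
    (φA : A →ₗ[ℂ] ℂ) (hφA : IsNormalIntegral A φA)
    (φH : H →ₗ[ℂ] ℂ) (hφH : IsNormalIntegral H φH)
    (M : Type) [Ring M] [HopfAlgebra ℂ M] (e : A ⊗[ℂ] H ≃ₗ[ℂ] M)
    (hM : IsBicross A H tri trl M e) :
    IsNormalIntegral M
      ((LinearMap.mul' ℂ ℂ) ∘ₗ (TensorProduct.map φA φH) ∘ₗ (e.symm : M →ₗ[ℂ] A ⊗[ℂ] H))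
    ∧ (∀ (x y : H) (a : A) {ι κ : Type} (s : Finset ι) (t : Finset κ)
        (x1 x2 : ι → H) (a1 a2 : κ → A), Rep2 x s x1 x2 → Rep2 a t a1 a2 →
        φA a * φH (x * y)
          = ∑ i ∈ s, ∑ j ∈ t, φA (tri (x1 i) (a1 j)) * φH (trl (x2 i) (a2 j) * y))
    ∧ (∀ (x : H) (a b : A) {ι κ : Type} (s : Finset ι) (t : Finset κ)
        (x1 x2 : ι → H) (a1 a2 : κ → A), Rep2 x s x1 x2 → Rep2 a t a1 a2 →
        φA (b * a) * φH x
          = ∑ i ∈ s, ∑ j ∈ t, φA (b * tri (x1 i) (a1 j)) * φH (trl (x2 i) (a2 j))) := by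
  refine ⟨hM.isNormalIntegral hφA hφH, fun x y a ι κ s t x1 x2 a1 a2 hx ha => ?_,
    fun x a b ι κ s t x1 x2 a1 a2 hx ha => ?_⟩
  · have h := congr(φH ($(hmp.sum_integral_tri_smul_trl hφA hx ha) * y))
    simpa [Finset.sum_mul, map_sum, smul_mul_assoc] using h.symm
  · have h := congr(φA (b * $(hmp.sum_integral_trl_smul_tri hφH hx ha)))
    simpa [Finset.mul_sum, map_sum, mul_smul_comm, mul_comm] using h.symm
end
end

section
/- Let H be a finite dimensional *-Hopf algebra, let V be a Yetter–Drinfel'd module over H, regarded also as a D(H)-module via the equivalence of categories, and let ⟨ , ⟩ be a hermitian form on V. Then ⟨ , ⟩ is invariant for the D(H)-module structure (⟨d·u,v⟩ = ⟨u,d*·v⟩ for all d ∈ D(H)) if and only if it is simultaneously invariant for the H-module structure (⟨x·u,v⟩ = ⟨u,x*·v⟩ for all x ∈ H) and for the H-comodule structure (∑S(u₋₁)⟨u₀,v⟩ = ∑v₋₁*⟨u,v₀⟩). -/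
open scoped TensorProduct
open Coalgebra

noncomputable section

/-- The convolution product on the linear dual of a Hopf algebra. -/
def convMul {H : Type} [Ring H] [HopfAlgebra ℂ H]
    (α β : Module.Dual ℂ H) : Module.Dual ℂ H :=
  (TensorProduct.dualDistrib ℂ H H (α ⊗ₜ[ℂ] β)) ∘ₗ Coalgebra.comul (R := ℂ)

/-- The involution `α*(x) = conj (α (S(x)*))` on the dual of a finite `*`-Hopf algebra. -/
def starDual {H : Type} [Ring H] [HopfAlgebra ℂ H] (σ : StarHopf H)
    (α : Module.Dual ℂ H) : Module.Dual ℂ H where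
  toFun z := (starRingEnd ℂ) (α (σ.st (HopfAlgebra.antipode (R := ℂ) z)))
  map_add' z w := by
    show (starRingEnd ℂ) (α (σ.st (HopfAlgebra.antipode (R := ℂ) (z + w)))) = _
    rw [map_add, σ.st_add, map_add, map_add]
  map_smul' c z := by
    show (starRingEnd ℂ) (α (σ.st (HopfAlgebra.antipode (R := ℂ) (c • z)))) = _
    rw [map_smul, σ.st_smul, map_smul, smul_eq_mul, map_mul, Complex.conj_conj]
    simp [smul_eq_mul]

/-- `DH`, identified with `H^∨ ⊗ H` via `e`, carries the Hopf algebra structure of the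
quantum double `D(H) = H^(∨ cop) ⋈ H` together with its natural involution:
the product is `(α x)(β y) = ∑ α (x₁ ⇀ β ↼ S⁻¹(x₃)) x₂ y`, the coproduct is
`Δ(α x) = ∑ α₂ x₁ ⊗ α₁ x₂`, and the involution is
`(α x)* = ∑ (x₁* ⇀ α* ↼ S⁻¹(x₃)*) x₂*`. -/
structure IsQuantumDouble (H : Type) [Ring H] [HopfAlgebra ℂ H] (σ : StarHopf H)
    (Sinv : H →ₗ[ℂ] H)
    (DH : Type) [Ring DH] [HopfAlgebra ℂ DH]
    (e : Module.Dual ℂ H ⊗[ℂ] H ≃ₗ[ℂ] DH) (σD : StarHopf DH) : Prop where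
  mul_def : ∀ (α β : Module.Dual ℂ H) (x y : H) {ι : Type} (s : Finset ι)
      (x1 x2 x3 : ι → H),
      comul3 H x = ∑ i ∈ s, (x1 i ⊗ₜ[ℂ] x2 i) ⊗ₜ[ℂ] x3 i →
      e (α ⊗ₜ[ℂ] x) * e (β ⊗ₜ[ℂ] y)
        = ∑ i ∈ s, e (convMul α
            (β ∘ₗ ((LinearMap.mulRight ℂ (x1 i)) ∘ₗ (LinearMap.mulLeft ℂ (Sinv (x3 i)))))
            ⊗ₜ[ℂ] (x2 i * y))
  one_def : (1 : DH) = e ((Coalgebra.counit (R := ℂ) : H →ₗ[ℂ] ℂ) ⊗ₜ[ℂ] (1 : H))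
  comul_def : ∀ (α : Module.Dual ℂ H) (x : H) {ι κ : Type} (s : Finset ι) (t : Finset κ)
      (x1 x2 : ι → H) (α1 α2 : κ → Module.Dual ℂ H),
      Rep2 x s x1 x2 →
      (∀ u v : H, α (u * v) = ∑ j ∈ t, α1 j u * α2 j v) →
      Coalgebra.comul (R := ℂ) (e (α ⊗ₜ[ℂ] x))
        = ∑ i ∈ s, ∑ j ∈ t, e (α2 j ⊗ₜ[ℂ] x1 i) ⊗ₜ[ℂ] e (α1 j ⊗ₜ[ℂ] x2 i)
  counit_def : ∀ (α : Module.Dual ℂ H) (x : H),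
      Coalgebra.counit (R := ℂ) (e (α ⊗ₜ[ℂ] x)) = α 1 * Coalgebra.counit (R := ℂ) x
  star_def : ∀ (α : Module.Dual ℂ H) (x : H) {ι : Type} (s : Finset ι)
      (x1 x2 x3 : ι → H),
      comul3 H x = ∑ i ∈ s, (x1 i ⊗ₜ[ℂ] x2 i) ⊗ₜ[ℂ] x3 i →
      σD.st (e (α ⊗ₜ[ℂ] x))
        = ∑ i ∈ s, e ((starDual σ α ∘ₗ
            ((LinearMap.mulRight ℂ (σ.st (x1 i))) ∘ₗ
              (LinearMap.mulLeft ℂ (σ.st (Sinv (x3 i))))))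
            ⊗ₜ[ℂ] σ.st (x2 i))

/-- A left comodule over a Hopf algebra. -/
structure LeftComodule (H : Type) [Ring H] [HopfAlgebra ℂ H]
    (V : Type) [AddCommGroup V] [Module ℂ V] : Type where
  χ : V →ₗ[ℂ] H ⊗[ℂ] V
  counit_cond : ∀ v : V, (TensorProduct.lid ℂ V)
      ((LinearMap.rTensor V (Coalgebra.counit (R := ℂ))) (χ v)) = v
  coassoc_cond : ∀ v : V, (TensorProduct.assoc ℂ H H V)
      ((LinearMap.rTensor V (Coalgebra.comul (R := ℂ))) (χ v))
      = (LinearMap.lTensor H χ) (χ v)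

/-- A left module structure (a representation) of an algebra on a complex vector space. -/
structure LeftModuleStr (H : Type) [Ring H] [HopfAlgebra ℂ H]
    (V : Type) [AddCommGroup V] [Module ℂ V] : Type where
  act : H →ₗ[ℂ] V →ₗ[ℂ] V
  act_one : ∀ v : V, act 1 v = v
  act_mul : ∀ (x y : H) (v : V), act (x * y) v = act x (act y v)

/-!
Since `D(H) = H^∨ H` and `(αx)* = x* α*`, a form is `D(H)`-invariant as soon as it is
invariant under the elements `ε ⊗ x` and `α ⊗ 1`.  On `ε ⊗ x` this is `H`-invariance.
The element `α ⊗ 1` acts by `w ↦ ∑ α(S⁻¹ w₋₁) w₀`, so invariance under all of them says,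
after pairing with `α`, that `∑ S⁻¹(u₋₁)⟨u₀,v⟩ = ∑ v₋₁*⟨u,v₀⟩`.  Finally `S⁻¹ = S`:
comparing the defining formula for `(αx)*` with `x* α*` gives `∑ x₁ S⁻¹(x₂) = ε(x) 1`,
so `S⁻¹` is a right convolution inverse of the identity, whose convolution inverse is `S`.
-/

namespace Coalgebra.Repr
variable {H : Type} [Ring H] [HopfAlgebra ℂ H] {ι : Type} {x : H}

lemma rep2 (r : Repr ℂ x ι) : Rep2 x r.index r.left r.right := r.eq.symm

lemma sum_smul_counit (r : Repr ℂ x ι) :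
    ∑ i ∈ r.index, counit (R := ℂ) (r.right i) • r.left i = x := by
  simpa only [map_sum, _root_.TensorProduct.rid_tmul, one_smul] using
    congrArg (_root_.TensorProduct.rid ℂ H) (sum_tmul_counit_eq (R := ℂ) r)

lemma comul3_eq_sum_sigma {κ : ι → Type} (r : Repr ℂ x ι)
    (r' : ∀ i, Repr ℂ (r.left i) (κ i)) :
    comul3 H x = ∑ q ∈ r.index.sigma fun i => (r' i).index,
      ((r' q.1).left q.2 ⊗ₜ[ℂ] (r' q.1).right q.2) ⊗ₜ[ℂ] r.right q.1 := by
  simp only [comul3, LinearMap.comp_apply, ← r.eq, map_sum, LinearMap.rTensor_tmul,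
    ← (r' _).eq, TensorProduct.sum_tmul, Finset.sum_sigma]

lemma sum_counit_mul_counit_smul {κ : ι → Type} (r : Repr ℂ x ι)
    (r' : ∀ i, Repr ℂ (r.left i) (κ i)) :
    ∑ q ∈ r.index.sigma (fun i => (r' i).index),
      (counit (R := ℂ) (r.right q.1) * counit (R := ℂ) ((r' q.1).left q.2)) •
        (r' q.1).right q.2 = x := by
  conv_rhs => rw [← r.sum_smul_counit]
  rw [Finset.sum_sigma]
  refine Finset.sum_congr rfl fun i _ => ?_
  conv_rhs => rw [← sum_counit_smul (r' i)]
  simp only [Finset.smul_sum, mul_smul]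

end Coalgebra.Repr

namespace StarHopf
variable {H : Type} [Ring H] [HopfAlgebra ℂ H] (σ : StarHopf H)

def toSemilinear : H →ₛₗ[starRingEnd ℂ] H where
  toFun := σ.st
  map_add' := σ.st_add
  map_smul' := σ.st_smul

lemma st_zero : σ.st 0 = 0 := map_zero σ.toSemilinear

lemma st_sum {ι : Type} (s : Finset ι) (f : ι → H) :
    σ.st (∑ i ∈ s, f i) = ∑ i ∈ s, σ.st (f i) :=
  map_sum σ.toSemilinear f s

lemma st_one : σ.st 1 = 1 := by
  simpa only [mul_one, σ.st_invol] using (σ.st_antimul (σ.st 1) 1).symm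

lemma st_injective : Function.Injective σ.st :=
  Function.LeftInverse.injective σ.st_invol

def repr {ι : Type} {x : H} (r : Coalgebra.Repr ℂ x ι) : Coalgebra.Repr ℂ (σ.st x) ι where
  index := r.index
  left i := σ.st (r.left i)
  right i := σ.st (r.right i)
  eq := (σ.st_comul x r.index r.left r.right r.rep2).symm

lemma sum_sigma_counit_smul_mul {ι : Type} {κ : ι → Type} {x : H}
    (r : Coalgebra.Repr ℂ x ι) (r' : ∀ i, Coalgebra.Repr ℂ (r.left i) (κ i)) (f : ι → H) :
    ∑ q ∈ r.index.sigma (fun i => (r' i).index),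
      counit (R := ℂ) (σ.st ((r' q.1).right q.2)) • (f q.1 * σ.st ((r' q.1).left q.2))
      = ∑ i ∈ r.index, f i * σ.st (r.left i) := by
  rw [Finset.sum_sigma]
  refine Finset.sum_congr rfl fun i _ => ?_
  simp only [← mul_smul_comm, ← Finset.mul_sum]
  exact congrArg (f i * ·) (σ.repr (r' i)).sum_smul_counit

lemma counit_st (x : H) : counit (R := ℂ) (σ.st x) = starRingEnd ℂ (counit (R := ℂ) x) := by
  -- both sides expand to `∑ conj (ε x₁) ε (x₂*)`, by the two counit laws
  set r := ℛ ℂ x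
  have h₁ : σ.st x = ∑ i ∈ r.index,
      starRingEnd ℂ (counit (R := ℂ) (r.left i)) • σ.st (r.right i) := by
    conv_lhs => rw [← sum_counit_smul r]
    simp only [st_sum, σ.st_smul]
  have h₂ : x = ∑ i ∈ r.index,
      starRingEnd ℂ (counit (R := ℂ) (σ.st (r.right i))) • r.left i := by
    conv_lhs => rw [← σ.st_invol x, ← (σ.repr r).sum_smul_counit]
    simp only [st_sum, σ.st_smul, σ.st_invol, repr]
  conv_rhs => rw [h₂]
  rw [h₁]
  simp only [map_sum, map_smul, smul_eq_mul, map_mul, Complex.conj_conj]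
  exact Finset.sum_congr rfl fun i _ => mul_comm _ _

end StarHopf

section AntipodeInverse
variable {H : Type} [Ring H] [HopfAlgebra ℂ H] {Sinv : H →ₗ[ℂ] H}

lemma antipode_inv_one (hSinv₁ : ∀ x : H, Sinv (HopfAlgebra.antipode ℂ x) = x) :
    Sinv (1 : H) = 1 := by
  simpa only [HopfAlgebra.antipode_one] using hSinv₁ 1

lemma counit_antipode_inv (hSinv₂ : ∀ x : H, HopfAlgebra.antipode ℂ (Sinv x) = x) (x : H) :
    counit (R := ℂ) (Sinv x) = counit (R := ℂ) x := by
  conv_rhs => rw [← hSinv₂ x, HopfAlgebra.counit_antipode]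

lemma antipode_inv_mul (hSinv₁ : ∀ x : H, Sinv (HopfAlgebra.antipode ℂ x) = x)
    (hSinv₂ : ∀ x : H, HopfAlgebra.antipode ℂ (Sinv x) = x) (a b : H) :
    Sinv (a * b) = Sinv b * Sinv a := by
  conv_lhs => rw [← hSinv₂ a, ← hSinv₂ b, ← HopfAlgebra.antipode_mul_antidistrib, hSinv₁]

lemma sum_antipode_inv_mul (hSinv₁ : ∀ x : H, Sinv (HopfAlgebra.antipode ℂ x) = x)
    (hSinv₂ : ∀ x : H, HopfAlgebra.antipode ℂ (Sinv x) = x) {ι : Type} {x : H}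
    (r : Coalgebra.Repr ℂ x ι) :
    ∑ i ∈ r.index, Sinv (r.right i) * r.left i = counit (R := ℂ) x • 1 := by
  have h := congrArg Sinv (HopfAlgebra.sum_antipode_mul_eq_smul r)
  simpa only [map_sum, map_smul, antipode_inv_mul hSinv₁ hSinv₂, hSinv₁,
    antipode_inv_one hSinv₁] using h

end AntipodeInverse

section Dual
variable {H : Type} [Ring H] [HopfAlgebra ℂ H]

lemma convMul_apply_repr {ι : Type} {x : H} (r : Coalgebra.Repr ℂ x ι)
    (α β : Module.Dual ℂ H) :
    convMul α β x = ∑ i ∈ r.index, α (r.left i) * β (r.right i) := by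
  simp [convMul, ← r.eq]

lemma convMul_counit (α : Module.Dual ℂ H) : convMul α (counit (R := ℂ)) = α := by
  ext x
  conv_rhs => rw [← (ℛ ℂ x).sum_smul_counit]
  simp only [convMul_apply_repr (ℛ ℂ x), map_sum, map_smul, smul_eq_mul, mul_comm (α _)]

lemma counit_convMul (β : Module.Dual ℂ H) : convMul (counit (R := ℂ)) β = β := by
  ext x
  simp only [convMul_apply_repr (ℛ ℂ x), ← smul_eq_mul, ← map_smul, ← map_sum,
    sum_counit_smul]

variable (σ : StarHopf H)

lemma starDual_counit : starDual σ (counit (R := ℂ)) = counit (R := ℂ) := by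
  ext z
  simp [starDual, σ.counit_st]

lemma conj_starDual_apply_antipode_inv {Sinv : H →ₗ[ℂ] H}
    (hSinv₂ : ∀ x : H, HopfAlgebra.antipode ℂ (Sinv x) = x) (α : Module.Dual ℂ H) (y : H) :
    starRingEnd ℂ (starDual σ α (Sinv y)) = α (σ.st y) := by
  simp [starDual, hSinv₂]

lemma eq_of_forall_starDual_apply_eq {Sinv : H →ₗ[ℂ] H}
    (hSinv₁ : ∀ x : H, Sinv (HopfAlgebra.antipode ℂ x) = x) {a b : H}
    (h : ∀ α, starDual σ α a = starDual σ α b) : a = b := by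
  have hst : σ.st (HopfAlgebra.antipode ℂ a) = σ.st (HopfAlgebra.antipode ℂ b) :=
    Module.eval_apply_injective ℂ <| LinearMap.ext fun α => by
      simpa [starDual] using congrArg (starRingEnd ℂ) (h α)
  rw [← hSinv₁ a, ← hSinv₁ b, σ.st_injective hst]

end Dual

lemma comul3_one {H : Type} [Ring H] [HopfAlgebra ℂ H] :
    comul3 H 1 =
      ∑ _i ∈ (Finset.univ : Finset Unit), ((1 : H) ⊗ₜ[ℂ] (1 : H)) ⊗ₜ[ℂ] (1 : H) := by
  simp [comul3, Algebra.TensorProduct.one_def]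

lemma counit_comp_mulRight_comp_mulLeft {H : Type} [Ring H] [HopfAlgebra ℂ H] (a b : H) :
    (counit (R := ℂ) : H →ₗ[ℂ] ℂ) ∘ₗ (LinearMap.mulRight ℂ a ∘ₗ LinearMap.mulLeft ℂ b)
      = (counit (R := ℂ) b * counit (R := ℂ) a) • counit (R := ℂ) := by
  ext z
  simp only [LinearMap.comp_apply, LinearMap.mulRight_apply, LinearMap.mulLeft_apply,
    LinearMap.smul_apply, Bialgebra.counit_mul, smul_eq_mul]
  ring

namespace IsQuantumDouble
variable {H : Type} [Ring H] [HopfAlgebra ℂ H] {σ : StarHopf H} {Sinv : H →ₗ[ℂ] H}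
  {DH : Type} [Ring DH] [HopfAlgebra ℂ DH] {e : Module.Dual ℂ H ⊗[ℂ] H ≃ₗ[ℂ] DH}
  {σD : StarHopf DH}

lemma tmul_eq_mul (hD : IsQuantumDouble H σ Sinv DH e σD)
    (hSinv₁ : ∀ x : H, Sinv (HopfAlgebra.antipode ℂ x) = x) (α : Module.Dual ℂ H) (x : H) :
    e (α ⊗ₜ[ℂ] x) = e (α ⊗ₜ[ℂ] 1) * e (counit (R := ℂ) ⊗ₜ[ℂ] x) := by
  simpa [antipode_inv_one hSinv₁, convMul_counit] using
    (hD.mul_def α counit 1 x Finset.univ _ _ _ comul3_one).symm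

lemma star_tmul_one (hD : IsQuantumDouble H σ Sinv DH e σD)
    (hSinv₁ : ∀ x : H, Sinv (HopfAlgebra.antipode ℂ x) = x) (α : Module.Dual ℂ H) :
    σD.st (e (α ⊗ₜ[ℂ] 1)) = e (starDual σ α ⊗ₜ[ℂ] 1) := by
  simpa [σ.st_one, antipode_inv_one hSinv₁] using
    hD.star_def α 1 Finset.univ _ _ _ comul3_one

lemma star_counit_tmul (hD : IsQuantumDouble H σ Sinv DH e σD)
    (hSinv₂ : ∀ x : H, HopfAlgebra.antipode ℂ (Sinv x) = x) (x : H) :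
    σD.st (e (counit (R := ℂ) ⊗ₜ[ℂ] x)) = e (counit (R := ℂ) ⊗ₜ[ℂ] σ.st x) := by
  set r := ℛ ℂ x
  set r' := fun i => ℛ ℂ (r.left i)
  rw [hD.star_def _ x _ _ _ _ (r.comul3_eq_sum_sigma r'), starDual_counit]
  simp only [counit_comp_mulRight_comp_mulLeft, TensorProduct.smul_tmul, ← map_sum,
    ← TensorProduct.tmul_sum, σ.counit_st, counit_antipode_inv hSinv₂]
  conv_rhs => rw [← r.sum_counit_mul_counit_smul r']
  simp only [σ.st_sum, σ.st_smul, map_mul]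

/-- Compare the defining formula for `(αx)*` with `(αx)* = x* α*`, contracting the
`H^∨`-leg at `1` and the `H`-leg with `ε`. -/
lemma starDual_sum_eq (hD : IsQuantumDouble H σ Sinv DH e σD)
    (hSinv₁ : ∀ x : H, Sinv (HopfAlgebra.antipode ℂ x) = x)
    (hSinv₂ : ∀ x : H, HopfAlgebra.antipode ℂ (Sinv x) = x)
    {ι : Type} {κ : ι → Type} {x : H} (r : Coalgebra.Repr ℂ x ι)
    (r' : ∀ i, Coalgebra.Repr ℂ (r.left i) (κ i)) (α : Module.Dual ℂ H) :
    starDual σ α (∑ q ∈ r.index.sigma (fun i => (r' i).index),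
        counit (R := ℂ) (σ.st ((r' q.1).right q.2)) •
          (σ.st (Sinv (r.right q.1)) * σ.st ((r' q.1).left q.2)))
      = starDual σ α (∑ q ∈ r.index.sigma (fun i => (r' i).index),
        counit (R := ℂ) (σ.st ((r' q.1).right q.2)) •
          (Sinv (σ.st (r.right q.1)) * σ.st ((r' q.1).left q.2))) := by
  have hdef := hD.star_def α x _ _ _ _ (r.comul3_eq_sum_sigma r')
  have hfactor : σD.st (e (α ⊗ₜ[ℂ] x)) = ∑ q ∈ r.index.sigma (fun i => (r' i).index),
      e ((starDual σ α ∘ₗ (LinearMap.mulRight ℂ (σ.st ((r' q.1).left q.2)) ∘ₗ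
        LinearMap.mulLeft ℂ (Sinv (σ.st (r.right q.1)))))
          ⊗ₜ[ℂ] σ.st ((r' q.1).right q.2)) := by
    rw [hD.tmul_eq_mul hSinv₁, σD.st_antimul, hD.star_counit_tmul hSinv₂,
      hD.star_tmul_one hSinv₁, hD.mul_def _ _ _ _ _ _ _ _
        ((σ.repr r).comul3_eq_sum_sigma fun i => σ.repr (r' i))]
    simp only [counit_convMul, mul_one]
    rfl
  let Φ : Module.Dual ℂ H ⊗[ℂ] H →ₗ[ℂ] ℂ :=
    LinearMap.mul' ℂ ℂ ∘ₗ TensorProduct.map (LinearMap.applyₗ 1) counit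
  simpa [Φ, map_sum, mul_comm] using
    congrArg (fun d => Φ (e.symm d)) (hdef.symm.trans hfactor)

lemma sum_mul_antipode_inv (hD : IsQuantumDouble H σ Sinv DH e σD)
    (hSinv₁ : ∀ x : H, Sinv (HopfAlgebra.antipode ℂ x) = x)
    (hSinv₂ : ∀ x : H, HopfAlgebra.antipode ℂ (Sinv x) = x)
    {ι : Type} {x : H} (r : Coalgebra.Repr ℂ x ι) :
    ∑ i ∈ r.index, r.left i * Sinv (r.right i) = counit (R := ℂ) x • 1 := by
  have key := eq_of_forall_starDual_apply_eq σ hSinv₁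
    (hD.starDual_sum_eq hSinv₁ hSinv₂ r fun i => ℛ ℂ (r.left i))
  apply σ.st_injective
  calc σ.st (∑ i ∈ r.index, r.left i * Sinv (r.right i))
      = ∑ i ∈ r.index, σ.st (Sinv (r.right i)) * σ.st (r.left i) := by
        simp only [σ.st_sum, σ.st_antimul]
    _ = ∑ i ∈ r.index, Sinv (σ.st (r.right i)) * σ.st (r.left i) := by
        rwa [σ.sum_sigma_counit_smul_mul r _ (fun i => σ.st (Sinv (r.right i))),
          σ.sum_sigma_counit_smul_mul r _ (fun i => Sinv (σ.st (r.right i)))] at key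
    _ = counit (R := ℂ) (σ.st x) • 1 := sum_antipode_inv_mul hSinv₁ hSinv₂ (σ.repr r)
    _ = σ.st (counit (R := ℂ) x • 1) := by rw [σ.st_smul, σ.st_one, σ.counit_st]

lemma antipode_eq (hD : IsQuantumDouble H σ Sinv DH e σD)
    (hSinv₁ : ∀ x : H, Sinv (HopfAlgebra.antipode ℂ x) = x)
    (hSinv₂ : ∀ x : H, HopfAlgebra.antipode ℂ (Sinv x) = x) :
    HopfAlgebra.antipode ℂ = Sinv := by
  have hright : WithConv.toConv (LinearMap.id : H →ₗ[ℂ] H) * WithConv.toConv Sinv = 1 := by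
    ext x
    simp [(ℛ ℂ x).convMul_apply, hD.sum_mul_antipode_inv hSinv₁ hSinv₂,
      Algebra.algebraMap_eq_smul_one]
  exact congrArg WithConv.ofConv (left_inv_eq_right_inv LinearMap.antipode_mul_id hright)

end IsQuantumDouble

section Invariance
variable {W : Type} [AddCommGroup W] [Module ℂ W]

def sesqFormOfConjSymm (f : W → W → ℂ) (hadd : ∀ u u' v, f (u + u') v = f u v + f u' v)
    (hsmul : ∀ (a : ℂ) u v, f (a • u) v = a * f u v)
    (hconj : ∀ u v, f v u = starRingEnd ℂ (f u v)) : W →ₗ[ℂ] W →ₗ⋆[ℂ] ℂ :=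
  LinearMap.mk₂'ₛₗ (RingHom.id ℂ) (starRingEnd ℂ) f hadd hsmul
    (fun u v v' => by rw [hconj, hadd, map_add, ← hconj, ← hconj])
    (fun a u v => by rw [hconj, hsmul, map_mul, ← hconj]; rfl)

variable {A : Type} [Ring A] [HopfAlgebra ℂ A]

def LeftModuleStr.IsStarInvariant (ρ : LeftModuleStr A W) (σ : StarHopf A)
    (B : W →ₗ[ℂ] W →ₗ⋆[ℂ] ℂ) (d : A) : Prop :=
  ∀ u v, B (ρ.act d u) v = B u (ρ.act (σ.st d) v)

namespace LeftModuleStr.IsStarInvariant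
variable {ρ : LeftModuleStr A W} {σ : StarHopf A} {B : W →ₗ[ℂ] W →ₗ⋆[ℂ] ℂ} {a b : A}

lemma zero : IsStarInvariant ρ σ B 0 := fun u v => by simp [σ.st_zero]

lemma add (ha : IsStarInvariant ρ σ B a) (hb : IsStarInvariant ρ σ B b) :
    IsStarInvariant ρ σ B (a + b) := fun u v => by
  simp only [σ.st_add, map_add, LinearMap.add_apply, ha u v, hb u v]

lemma mul (ha : IsStarInvariant ρ σ B a) (hb : IsStarInvariant ρ σ B b) :
    IsStarInvariant ρ σ B (a * b) := fun u v => by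
  rw [ρ.act_mul, ha, hb, σ.st_antimul, ρ.act_mul]

end LeftModuleStr.IsStarInvariant

lemma LeftModuleStr.isStarInvariant_of_tmul {ρ : LeftModuleStr A W} {σ : StarHopf A}
    {B : W →ₗ[ℂ] W →ₗ⋆[ℂ] ℂ} {M N : Type} [AddCommGroup M] [Module ℂ M] [AddCommGroup N]
    [Module ℂ N] {e : M ⊗[ℂ] N →ₗ[ℂ] A} (he : Function.Surjective e) {a : M → A} {b : N → A}
    (hab : ∀ m n, e (m ⊗ₜ[ℂ] n) = a m * b n) (ha : ∀ m, ρ.IsStarInvariant σ B (a m))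
    (hb : ∀ n, ρ.IsStarInvariant σ B (b n)) (d : A) : ρ.IsStarInvariant σ B d := by
  obtain ⟨w, rfl⟩ := he d
  induction w using TensorProduct.induction_on with
  | zero => simpa using IsStarInvariant.zero
  | tmul m n => simpa [hab] using (ha m).mul (hb n)
  | add w w' hw hw' => simpa using hw.add hw'

lemma dual_act_invariant_iff {H : Type} [Ring H] [HopfAlgebra ℂ H] (σ : StarHopf H)
    {Sinv : H →ₗ[ℂ] H} (hSinv₂ : ∀ x : H, HopfAlgebra.antipode ℂ (Sinv x) = x)
    (c : LeftComodule H W) {act : Module.Dual ℂ H → W → W}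
    (hact : ∀ (α : Module.Dual ℂ H) (w : W) {κ : Type} (t : Finset κ) (h : κ → H)
      (w0 : κ → W), TRep (c.χ w) t h w0 → act α w = ∑ j ∈ t, α (Sinv (h j)) • w0 j)
    (B : W →ₗ[ℂ] W →ₗ⋆[ℂ] ℂ) :
    (∀ α u v, B (act α u) v = B u (act (starDual σ α) v)) ↔
      ∀ (u v : W) {ι κ : Type} (s : Finset ι) (t : Finset κ)
        (u1 : ι → H) (u0 : ι → W) (v1 : κ → H) (v0 : κ → W),
        TRep (c.χ u) s u1 u0 → TRep (c.χ v) t v1 v0 →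
        ∑ i ∈ s, B (u0 i) v • Sinv (u1 i) = ∑ j ∈ t, B u (v0 j) • σ.st (v1 j) := by
  have hleft : ∀ α u v {ι : Type} (s : Finset ι) (u1 : ι → H) (u0 : ι → W),
      TRep (c.χ u) s u1 u0 → B (act α u) v = α (∑ i ∈ s, B (u0 i) v • Sinv (u1 i)) := by
    intro α u v ι s u1 u0 hu
    simp [hact α u s u1 u0 hu, map_sum, mul_comm]
  have hright : ∀ α u v {κ : Type} (t : Finset κ) (v1 : κ → H) (v0 : κ → W),
      TRep (c.χ v) t v1 v0 →
        B u (act (starDual σ α) v) = α (∑ j ∈ t, B u (v0 j) • σ.st (v1 j)) := by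
    intro α u v κ t v1 v0 hv
    simp [hact _ v t v1 v0 hv, map_sum, conj_starDual_apply_antipode_inv σ hSinv₂,
      mul_comm]
  constructor
  · intro h u v ι κ s t u1 u0 v1 v0 hu hv
    refine Module.eval_apply_injective ℂ (LinearMap.ext fun α => ?_)
    simpa [hleft α u v s u1 u0 hu, hright α u v t v1 v0 hv] using h α u v
  · intro h α u v
    obtain ⟨s, hs⟩ := TensorProduct.exists_finset (c.χ u)
    obtain ⟨t, ht⟩ := TensorProduct.exists_finset (c.χ v)
    rw [hleft α u v s _ _ hs, hright α u v t _ _ ht, h u v s t _ _ _ _ hs ht]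

end Invariance

theorem yetter_drinfeld_invariance_iff_general
    {H : Type} [Ring H] [HopfAlgebra ℂ H] (σ : StarHopf H)
    (Sinv : H →ₗ[ℂ] H)
    (hSinv₁ : ∀ x : H, Sinv (HopfAlgebra.antipode (R := ℂ) x) = x)
    (hSinv₂ : ∀ x : H, HopfAlgebra.antipode (R := ℂ) (Sinv x) = x)
    -- the quantum double with its involution
    (DH : Type) [Ring DH] [HopfAlgebra ℂ DH]
    (e : Module.Dual ℂ H ⊗[ℂ] H ≃ₗ[ℂ] DH) (σD : StarHopf DH)
    (hD : IsQuantumDouble H σ Sinv DH e σD)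
    -- a Yetter–Drinfel'd module `W`
    (W : Type) [AddCommGroup W] [Module ℂ W]
    (m : LeftModuleStr H W) (c : LeftComodule H W)
    -- the corresponding `D(H)`-module structure on `W`
    (mD : LeftModuleStr DH W)
    (hmD_H : ∀ (x : H) (w : W),
        mD.act (e ((Coalgebra.counit (R := ℂ) : H →ₗ[ℂ] ℂ) ⊗ₜ[ℂ] x)) w = m.act x w)
    (hmD_dual : ∀ (α : Module.Dual ℂ H) (w : W) {κ : Type} (t : Finset κ)
        (h : κ → H) (w0 : κ → W), TRep (c.χ w) t h w0 →
        mD.act (e (α ⊗ₜ[ℂ] (1 : H))) w = ∑ j ∈ t, α (Sinv (h j)) • w0 j)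
    -- a hermitian form on `W`
    (hm : W → W → ℂ)
    (hm_add : ∀ u u' v : W, hm (u + u') v = hm u v + hm u' v)
    (hm_smul : ∀ (a : ℂ) (u v : W), hm (a • u) v = a * hm u v)
    (hm_conj : ∀ u v : W, hm v u = (starRingEnd ℂ) (hm u v)) :
    (∀ (d : DH) (u v : W), hm (mD.act d u) v = hm u (mD.act (σD.st d) v))
      ↔ ((∀ (x : H) (u v : W), hm (m.act x u) v = hm u (m.act (σ.st x) v)) ∧
          (∀ (u v : W) {ι κ : Type} (s : Finset ι) (t : Finset κ)
            (u1 : ι → H) (u0 : ι → W) (v1 : κ → H) (v0 : κ → W),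
            TRep (c.χ u) s u1 u0 → TRep (c.χ v) t v1 v0 →
            ∑ i ∈ s, hm (u0 i) v • (HopfAlgebra.antipode (R := ℂ) (u1 i))
              = ∑ j ∈ t, hm u (v0 j) • σ.st (v1 j))) := by
  obtain rfl : HopfAlgebra.antipode ℂ = Sinv := hD.antipode_eq hSinv₁ hSinv₂
  let B := sesqFormOfConjSymm hm hm_add hm_smul hm_conj
  have hdual := dual_act_invariant_iff σ hSinv₂ c hmD_dual B
  have hstarH : ∀ x, mD.IsStarInvariant σD B (e (counit (R := ℂ) ⊗ₜ[ℂ] x)) ↔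
      ∀ u v, hm (m.act x u) v = hm u (m.act (σ.st x) v) := by
    intro x
    simp only [LeftModuleStr.IsStarInvariant, hD.star_counit_tmul hSinv₂, hmD_H]
    rfl
  have hstarDual : ∀ α, mD.IsStarInvariant σD B (e (α ⊗ₜ[ℂ] 1)) ↔
      ∀ u v, hm (mD.act (e (α ⊗ₜ[ℂ] 1)) u) v
        = hm u (mD.act (e (starDual σ α ⊗ₜ[ℂ] 1)) v) := by
    intro α
    simp only [LeftModuleStr.IsStarInvariant, hD.star_tmul_one hSinv₁]
    rfl
  constructor
  · intro h
    exact ⟨fun x => (hstarH x).1 (h _), hdual.1 fun α => (hstarDual α).1 (h _)⟩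
  · rintro ⟨hH, hcomod⟩
    exact mD.isStarInvariant_of_tmul e.surjective (hD.tmul_eq_mul hSinv₁)
      (fun α => (hstarDual α).2 (hdual.2 hcomod α)) (fun x => (hstarH x).2 (hH x))

/-- Let `H` be a finite dimensional `*`-Hopf algebra, let `W` be a
Yetter–Drinfel'd module over `H` (a left `H`-module and left `H`-comodule satisfying the
Yetter–Drinfel'd compatibility), regarded also as a module over the quantum double `D(H)`
via the equivalence of categories, and let `⟨ , ⟩` be a hermitian form on `W`.  Then
`⟨ , ⟩` is invariant for the `D(H)`-module structure (`⟨d·u,v⟩ = ⟨u,d*·v⟩` for all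
`d ∈ D(H)`) if and only if it is simultaneously invariant for the `H`-module structure
(`⟨x·u,v⟩ = ⟨u,x*·v⟩`) and for the `H`-comodule structure
(`∑ S(u₋₁)⟨u₀,v⟩ = ∑ v₋₁*⟨u,v₀⟩`). -/
theorem yetter_drinfeld_invariance_iff
    {H : Type} [Ring H] [HopfAlgebra ℂ H] [FiniteDimensional ℂ H] (σ : StarHopf H)
    (Sinv : H →ₗ[ℂ] H)
    (hSinv₁ : ∀ x : H, Sinv (HopfAlgebra.antipode (R := ℂ) x) = x)
    (hSinv₂ : ∀ x : H, HopfAlgebra.antipode (R := ℂ) (Sinv x) = x)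
    -- the quantum double with its involution
    (DH : Type) [Ring DH] [HopfAlgebra ℂ DH]
    (e : Module.Dual ℂ H ⊗[ℂ] H ≃ₗ[ℂ] DH) (σD : StarHopf DH)
    (hD : IsQuantumDouble H σ Sinv DH e σD)
    -- a Yetter–Drinfel'd module `W`
    (W : Type) [AddCommGroup W] [Module ℂ W]
    (m : LeftModuleStr H W) (c : LeftComodule H W)
    (hYD : ∀ (x : H) (w : W) {ι κ : Type} (s : Finset ι) (t : Finset κ)
        (x1 x2 : ι → H) (h : κ → H) (w0 : κ → W),
        Rep2 x s x1 x2 → TRep (c.χ w) t h w0 →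
        ∑ i ∈ s, (LinearMap.rTensor W (LinearMap.mulRight ℂ (x2 i)))
            (c.χ (m.act (x1 i) w))
          = ∑ i ∈ s, ∑ j ∈ t, (x1 i * h j) ⊗ₜ[ℂ] m.act (x2 i) (w0 j))
    -- the corresponding `D(H)`-module structure on `W`
    (mD : LeftModuleStr DH W)
    (hmD_H : ∀ (x : H) (w : W),
        mD.act (e ((Coalgebra.counit (R := ℂ) : H →ₗ[ℂ] ℂ) ⊗ₜ[ℂ] x)) w = m.act x w)
    (hmD_dual : ∀ (α : Module.Dual ℂ H) (w : W) {κ : Type} (t : Finset κ)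
        (h : κ → H) (w0 : κ → W), TRep (c.χ w) t h w0 →
        mD.act (e (α ⊗ₜ[ℂ] (1 : H))) w = ∑ j ∈ t, α (Sinv (h j)) • w0 j)
    -- a hermitian form on `W`
    (hm : W → W → ℂ)
    (hm_add : ∀ u u' v : W, hm (u + u') v = hm u v + hm u' v)
    (hm_smul : ∀ (a : ℂ) (u v : W), hm (a • u) v = a * hm u v)
    (hm_conj : ∀ u v : W, hm v u = (starRingEnd ℂ) (hm u v)) :
    (∀ (d : DH) (u v : W), hm (mD.act d u) v = hm u (mD.act (σD.st d) v))
      ↔ ((∀ (x : H) (u v : W), hm (m.act x u) v = hm u (m.act (σ.st x) v)) ∧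
          (∀ (u v : W) {ι κ : Type} (s : Finset ι) (t : Finset κ)
            (u1 : ι → H) (u0 : ι → W) (v1 : κ → H) (v0 : κ → W),
            TRep (c.χ u) s u1 u0 → TRep (c.χ v) t v1 v0 →
            ∑ i ∈ s, hm (u0 i) v • (HopfAlgebra.antipode (R := ℂ) (u1 i))
              = ∑ j ∈ t, hm u (v0 j) • σ.st (v1 j))) :=
  yetter_drinfeld_invariance_iff_general σ Sinv hSinv₁ hSinv₂ DH e σD hD W m c mD hmD_H hmD_dual hm
    hm_add hm_smul hm_conj
end
end
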